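/- Let D ⊆ ℝᵈ be a compact convex set and let f : D → ℝ be a convex function that is Lipschitz continuous on D. Then for every ε > 0 there exist a depth K ≥ 2, nonnegative vectors w₁, …, w_K ∈ ℝ^{2d}, and scalars c₁, …, c_K such that the ReLU network on the expanded input x̂ = (x, −x), defined by z₁(x) = max(w₁·x̂ + c₁, 0), z_i(x) = max(z_{i−1}(x) + wᵢ·x̂ + cᵢ, 0) for i = 2, …, K−1, and z_K(x) = z_{K−1}(x) + w_K·x̂ + c_K, satisfies |f(x) − z_K(x)| ≤ ε for all x ∈ D. -/

import Mathlib

/-!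
A continuous convex function on a compact set is, up to `ε`, the maximum of finitely many of its
continuous affine minorants: by Hahn–Banach every point has an affine minorant within `ε / 2` of
the function there, it stays within `ε` on a relative neighbourhood, and compactness picks finitely
many of them. A maximum of affine functions `G₀, …, G_{K+1}` is what the network computes when
layer `i` carries `Gᵢ - Gᵢ₊₁`, since `max (a - c) (b - c) = max a b - c` makes layer `i` output
`max (G₀, …, Gᵢ₊₁) - Gᵢ₊₁`. Nonnegative weights on `(x, -x)` express any linear part through the
positive and negative parts of its coefficients.
-/

/-- The hidden layers of the nonnegative-weight single-ReLU-per-layer network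
on the expanded input `x̂ ∈ ℝ^{2d}`:
`znet … x̂ i` is the layer `z_{i+1}` of the construction
`z₁ = max (w₁⋅x̂ + c₁) 0`, `z_i = max (z_{i-1} + wᵢ⋅x̂ + cᵢ) 0`. -/
noncomputable def znet (d : ℕ) (w : ℕ → (Fin d ⊕ Fin d) → ℝ) (c : ℕ → ℝ)
    (xhat : Fin d ⊕ Fin d → ℝ) : ℕ → ℝ
  | 0 => max ((∑ l, w 0 l * xhat l) + c 0) 0
  | (i + 1) => max (znet d w c xhat i + ((∑ l, w (i + 1) l * xhat l) + c (i + 1))) 0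

section Network

variable {d : ℕ}

def expandedWeights (φ : (Fin d → ℝ) →ₗ[ℝ] ℝ) : Fin d ⊕ Fin d → ℝ :=
  Sum.elim (fun j => (φ (Pi.single j 1))⁺) (fun j => (φ (Pi.single j 1))⁻)

lemma expandedWeights_nonneg (φ : (Fin d → ℝ) →ₗ[ℝ] ℝ) (l : Fin d ⊕ Fin d) :
    0 ≤ expandedWeights φ l := by
  cases l <;> simp [expandedWeights]

lemma sum_expandedWeights_mul (φ : (Fin d → ℝ) →ₗ[ℝ] ℝ) (x : Fin d → ℝ) :
    ∑ l, expandedWeights φ l * Sum.elim x (fun j => -x j) l = φ x := by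
  classical
  rw [Fintype.sum_sum_type, ← Finset.sum_add_distrib, φ.pi_apply_eq_sum_univ x]
  refine Finset.sum_congr rfl fun j _ => ?_
  have hsingle : (fun k => if j = k then (1 : ℝ) else 0) = Pi.single j 1 := by
    ext k; simp [Pi.single_apply, eq_comm]
  simp only [expandedWeights, Sum.elim_inl, Sum.elim_inr, hsingle, smul_eq_mul]
  linear_combination x j * posPart_sub_negPart (φ (Pi.single j 1))

lemma znet_eq_partialSups_sub {w : ℕ → (Fin d ⊕ Fin d) → ℝ} {c : ℕ → ℝ}
    {xhat : Fin d ⊕ Fin d → ℝ} {G : ℕ → ℝ} {i : ℕ}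
    (h : ∀ j ≤ i, (∑ l, w j l * xhat l) + c j = G j - G (j + 1)) :
    znet d w c xhat i = partialSups G (i + 1) - G (i + 1) := by
  have hsucc (n : ℕ) : partialSups G (n + 1) = max (partialSups G n) (G (n + 1)) :=
    partialSups_succ G n
  induction i with
  | zero => rw [znet, h 0 le_rfl, hsucc, partialSups_zero, ← max_sub_sub_right, sub_self]
  | succ i ih =>
    rw [znet, ih fun j hj => h j (hj.trans i.le_succ), h (i + 1) le_rfl, hsucc (i + 1),
      ← max_sub_sub_right, sub_self, sub_add_sub_cancel]

theorem exists_znet_eq_partialSups (K : ℕ) (φ : ℕ → (Fin d → ℝ) →ₗ[ℝ] ℝ) (b : ℕ → ℝ) :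
    ∃ (w : ℕ → (Fin d ⊕ Fin d) → ℝ) (c : ℕ → ℝ), (∀ i l, 0 ≤ w i l) ∧ ∀ x : Fin d → ℝ,
      znet d w c (Sum.elim x (fun l => -x l)) K +
          ((∑ l, w (K + 1) l * Sum.elim x (fun l' => -x l') l) + c (K + 1)) =
        partialSups (fun i => φ i x + b i) (K + 1) := by
  refine ⟨fun i => expandedWeights (if i ≤ K then φ i - φ (i + 1) else φ (K + 1)),
    fun i => if i ≤ K then b i - b (i + 1) else b (K + 1),
    fun i l => expandedWeights_nonneg _ l, fun x => ?_⟩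
  have hidden : ∀ j ≤ K, ∑ l, expandedWeights (if j ≤ K then φ j - φ (j + 1) else φ (K + 1)) l *
      Sum.elim x (fun l => -x l) l + (if j ≤ K then b j - b (j + 1) else b (K + 1)) =
      (φ j x + b j) - (φ (j + 1) x + b (j + 1)) := by
    intro j hj
    simp only [if_pos hj, sum_expandedWeights_mul, LinearMap.sub_apply]
    ring
  rw [znet_eq_partialSups_sub hidden]
  simp only [show ¬K + 1 ≤ K by omega, if_false, sum_expandedWeights_mul]
  ring

end Network

lemma Finset.Nonempty.exists_nat_enumeration {α : Type*} {t : Finset α} (ht : t.Nonempty) :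
    ∃ (K : ℕ) (p : ℕ → α), (∀ i, p i ∈ t) ∧ ∀ y ∈ t, ∃ i ≤ K, p i = y := by
  obtain ⟨a, ha⟩ := ht
  refine ⟨t.toList.length, fun i => t.toList.getD i a, fun i => ?_, fun y hy => ?_⟩
  · show t.toList.getD i a ∈ t
    rcases lt_or_ge i t.toList.length with hi | hi
    · rw [List.getD_eq_getElem _ _ hi]; exact Finset.mem_toList.mp (List.getElem_mem hi)
    · rwa [List.getD_eq_default _ _ hi]
  · obtain ⟨i, hi, rfl⟩ := List.mem_iff_getElem.mp (Finset.mem_toList.mpr hy)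
    exact ⟨i, hi.le, List.getD_eq_getElem _ _ hi⟩

section Minorants

variable {E : Type*} [AddCommGroup E] [Module ℝ E] [TopologicalSpace E] [IsTopologicalAddGroup E]
  [ContinuousSMul ℝ E] [LocallyConvexSpace ℝ E] {s : Set E} {f : E → ℝ}

lemma ConvexOn.exists_affine_minorant_eq_of_lt (hs : IsClosed s) (hf : ConvexOn ℝ s f)
    (hfc : LowerSemicontinuousOn f s) {x : E} (hx : x ∈ s) {a : ℝ} (ha : a < f x) :
    ∃ (φ : E →L[ℝ] ℝ) (b : ℝ), (∀ y ∈ s, φ y + b ≤ f y) ∧ φ x + b = a := by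
  obtain ⟨φ, b, hle, heq⟩ := hf.exists_affine_le_of_lt (𝕜 := ℝ) hx ha hs hfc
  exact ⟨φ, b, fun y hy => by simpa using hle ⟨y, hy⟩, by simpa using heq⟩

theorem ConvexOn.exists_nat_affine_minorants_approx [T2Space E] (hs : IsCompact s)
    (hf : ConvexOn ℝ s f) (hfc : ContinuousOn f s) {ε : ℝ} (hε : 0 < ε) :
    ∃ (K : ℕ) (φ : ℕ → E →L[ℝ] ℝ) (b : ℕ → ℝ), (∀ i, ∀ y ∈ s, φ i y + b i ≤ f y) ∧
      ∀ y ∈ s, ∃ i ≤ K, f y - ε < φ i y + b i := by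
  rcases s.eq_empty_or_nonempty with rfl | hne
  · exact ⟨0, 0, 0, by simp, by simp⟩
  choose! ψ c hψle hψeq using fun x (hx : x ∈ s) =>
    hf.exists_affine_minorant_eq_of_lt hs.isClosed hfc.lowerSemicontinuousOn hx
      (sub_lt_self (f x) (half_pos hε))
  have hnhds : ∀ x ∈ s, {y | f y - ε < ψ x y + c x} ∈ nhdsWithin x s := by
    intro x hx
    refine ((hfc x hx).sub tendsto_const_nhds).eventually_lt
      ((ψ x).continuous.continuousWithinAt.add tendsto_const_nhds) ?_
    show f x - ε < ψ x x + c x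
    linarith [hψeq x hx]
  obtain ⟨t, hts, hcover⟩ := hs.elim_nhdsWithin_subcover _ hnhds
  have htne : t.Nonempty := by
    obtain ⟨y, hy⟩ := hne
    obtain ⟨x, hxt, -⟩ := Set.mem_iUnion₂.mp (hcover hy)
    exact ⟨x, hxt⟩
  obtain ⟨K, p, hpt, hpsurj⟩ := htne.exists_nat_enumeration
  refine ⟨K, fun i => ψ (p i), fun i => c (p i), fun i => hψle (p i) (hts _ (hpt i)),
    fun y hy => ?_⟩
  obtain ⟨x, hxt, hyx⟩ := Set.mem_iUnion₂.mp (hcover hy)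
  obtain ⟨i, hiK, rfl⟩ := hpsurj x hxt
  exact ⟨i, hiK, hyx⟩

end Minorants

theorem icnn_representation_power_general
    (d : ℕ) (D : Set (Fin d → ℝ)) (hDcomp : IsCompact D)
    (f : (Fin d → ℝ) → ℝ) (hconv : ConvexOn ℝ D f)
    (hLip : ∃ L : NNReal, LipschitzOnWith L f D)
    (ε : ℝ) (hε : 0 < ε) :
    ∃ (K : ℕ) (w : ℕ → (Fin d ⊕ Fin d) → ℝ) (c : ℕ → ℝ),
      (∀ i, i ≤ K + 1 → ∀ l, 0 ≤ w i l) ∧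
      ∀ x ∈ D,
        |f x - (znet d w c (Sum.elim x (fun l => -x l)) K +
          ((∑ l, w (K + 1) l * Sum.elim x (fun l' => -x l') l) + c (K + 1)))| ≤ ε := by
  obtain ⟨L, hL⟩ := hLip
  obtain ⟨K, φ, b, hle, hclose⟩ :=
    hconv.exists_nat_affine_minorants_approx hDcomp hL.continuousOn hε
  obtain ⟨w, c, hw, hnet⟩ := exists_znet_eq_partialSups K (fun i => (φ i).toLinearMap) b
  refine ⟨K, w, c, fun i _ => hw i, fun x hx => ?_⟩
  obtain ⟨i, hiK, hi⟩ := hclose x hx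
  have hupper : partialSups (fun i => φ i x + b i) (K + 1) ≤ f x :=
    partialSups_le _ _ _ fun j _ => hle j x hx
  have hlower : φ i x + b i ≤ partialSups (fun i => φ i x + b i) (K + 1) :=
    le_partialSups_of_le (fun i => φ i x + b i) (hiK.trans K.le_succ)
  rw [hnet, abs_sub_le_iff]
  simp only [ContinuousLinearMap.coe_coe]
  constructor <;> linarith

/-- **Theorem 1 (representation power of ICNN).**
Let `D ⊆ ℝᵈ` be a compact convex set and `f : D → ℝ` convex and Lipschitz
continuous on `D`.  For every `ε > 0` there exist a depth `K + 2 ≥ 2`,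
nonnegative vectors `w₁, …, w_{K+2} ∈ ℝ^{2d}` and scalars `c₁, …, c_{K+2}` such
that the ReLU network on the expanded input `x̂ = (x, -x)`, defined by
`z₁(x) = max (w₁⋅x̂ + c₁) 0`, `z_i(x) = max (z_{i-1}(x) + wᵢ⋅x̂ + cᵢ) 0` for
`i = 2, …, K+1`, and `z_{K+2}(x) = z_{K+1}(x) + w_{K+2}⋅x̂ + c_{K+2}`,
satisfies `|f x - z_{K+2}(x)| ≤ ε` for all `x ∈ D`. -/
theorem icnn_representation_power
    (d : ℕ) (D : Set (Fin d → ℝ)) (hDconv : Convex ℝ D) (hDcomp : IsCompact D)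
    (f : (Fin d → ℝ) → ℝ) (hconv : ConvexOn ℝ D f)
    (hLip : ∃ L : NNReal, LipschitzOnWith L f D)
    (ε : ℝ) (hε : 0 < ε) :
    ∃ (K : ℕ) (w : ℕ → (Fin d ⊕ Fin d) → ℝ) (c : ℕ → ℝ),
      (∀ i, i ≤ K + 1 → ∀ l, 0 ≤ w i l) ∧
      ∀ x ∈ D,
        |f x - (znet d w c (Sum.elim x (fun l => -x l)) K +
          ((∑ l, w (K + 1) l * Sum.elim x (fun l' => -x l') l) + c (K + 1)))| ≤ ε :=
  icnn_representation_power_general d D hDcomp f hconv hLip ε hε
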